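/- arXiv:2401.05681 — 5 statements merged into one kernel-verified Lean document; each statement's English description precedes it below -/
import Mathlib

section
/- For every real number x ≥ 1, the Gamma function satisfies the two-sided Stirling bound: 1 < (2π)^{-1/2} · x^{1/2 − x} · e^x · Γ(x) < e^{1/(12x)}. -/
open Real Filter Topology Finset


lemma log_ineq_lower {u : ℝ} (hu0 : 0 < u) (hu1 : u < 1) :
    2*u < Real.log (1+u) - Real.log (1-u) := by
  set f : ℝ → ℝ := fun t => Real.log (1+t) - Real.log (1-t) - 2*t with hf
  have key : StrictMonoOn f (Set.Icc 0 u) := by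
    apply strictMonoOn_of_deriv_pos (convex_Icc 0 u)
    · apply ContinuousOn.sub (ContinuousOn.sub ?_ ?_) (continuousOn_const.mul continuousOn_id)
      · exact Real.continuousOn_log.comp (by fun_prop)
          (fun t ht => by
            simp only [Set.mem_Icc] at ht
            simp only [Set.mem_compl_iff, Set.mem_singleton_iff]
            intro h
            nlinarith)
      · apply Real.continuousOn_log.comp (by fun_prop)
        intro t ht
        simp only [Set.mem_Icc] at ht
        have : t < 1 := lt_of_le_of_lt ht.2 hu1
        simp only [Set.mem_compl_iff, Set.mem_singleton_iff]
        nlinarith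
    · intro t ht
      rw [interior_Icc, Set.mem_Ioo] at ht
      have h1 : (0:ℝ) < 1 + t := by linarith
      have h2 : (0:ℝ) < 1 - t := by nlinarith
      have hd : HasDerivAt f (1/(1+t) - (-1)/(1-t) - 2) t := by
        have d1 : HasDerivAt (fun t : ℝ => Real.log (1+t)) (1/(1+t)) t := by
          simpa using ((hasDerivAt_id t).const_add 1).log h1.ne'
        have d2 : HasDerivAt (fun t : ℝ => Real.log (1-t)) ((-1)/(1-t)) t := by
          simpa [sub_eq_add_neg] using ((hasDerivAt_id t).neg.const_add 1).log h2.ne'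
        exact ((d1.sub d2).sub ((hasDerivAt_id t).const_mul 2)).congr_deriv (by ring)
      rw [hd.deriv]
      rw [div_sub_div _ _ h1.ne' h2.ne', sub_pos, lt_div_iff₀ (by positivity)]
      nlinarith
  have := key (Set.left_mem_Icc.2 hu0.le) (Set.right_mem_Icc.2 hu0.le) hu0
  simp only [hf] at this
  simp at this
  linarith

lemma log_ineq_upper {u : ℝ} (hu0 : 0 < u) (hu1 : u < 1) :
    Real.log (1+u) - Real.log (1-u) < 2*u + 2*u^3/(3*(1-u^2)) := by
  set f : ℝ → ℝ := fun t => 2*t + 2*t^3/(3*(1-t^2)) - (Real.log (1+t) - Real.log (1-t)) with hf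
  have key : StrictMonoOn f (Set.Icc 0 u) := by
    apply strictMonoOn_of_deriv_pos (convex_Icc 0 u)
    · apply ContinuousOn.sub
      · apply ContinuousOn.add (continuousOn_const.mul continuousOn_id)
        apply ContinuousOn.div (by fun_prop) (by fun_prop)
        intro t ht
        simp only [Set.mem_Icc] at ht
        have : t < 1 := lt_of_le_of_lt ht.2 hu1
        nlinarith
      · apply ContinuousOn.sub
        · exact Real.continuousOn_log.comp (by fun_prop)
            (fun t ht => by
            simp only [Set.mem_Icc] at ht
            simp only [Set.mem_compl_iff, Set.mem_singleton_iff]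
            intro h
            nlinarith)
        · apply Real.continuousOn_log.comp (by fun_prop)
          intro t ht
          simp only [Set.mem_Icc] at ht
          have : t < 1 := lt_of_le_of_lt ht.2 hu1
          simp only [Set.mem_compl_iff, Set.mem_singleton_iff]
          nlinarith
    · intro t ht
      rw [interior_Icc, Set.mem_Ioo] at ht
      have ht1 : t < 1 := lt_of_lt_of_le ht.2 hu1.le
      have h1 : (0:ℝ) < 1 + t := by linarith
      have h2 : (0:ℝ) < 1 - t := by nlinarith
      have h3 : (0:ℝ) < 1 - t^2 := by nlinarith
      have hd : HasDerivAt f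
          (2 + (2*(3*t^2)*(3*(1-t^2)) - 2*t^3*(3*(-(2*t))))/(3*(1-t^2))^2
            - (1/(1+t) - (-1)/(1-t))) t := by
        have d1 : HasDerivAt (fun t : ℝ => Real.log (1+t)) (1/(1+t)) t := by
          simpa using ((hasDerivAt_id t).const_add 1).log h1.ne'
        have d2 : HasDerivAt (fun t : ℝ => Real.log (1-t)) ((-1)/(1-t)) t := by
          simpa [sub_eq_add_neg] using ((hasDerivAt_id t).neg.const_add 1).log h2.ne'
        have d3 : HasDerivAt (fun t : ℝ => 2*t^3) (2*(3*t^2)) t := by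
          simpa using ((hasDerivAt_pow 3 t).const_mul 2)
        have d4 : HasDerivAt (fun t : ℝ => 3*(1-t^2)) (3*(-(2*t))) t := by
          have : HasDerivAt (fun t : ℝ => 1-t^2) (-(2*t)) t := by
            simpa using ((hasDerivAt_pow 2 t)).const_sub 1
          simpa using this.const_mul 3
        have d5 := d3.div d4 (by positivity)
        have d6 : HasDerivAt (fun t : ℝ => 2*t) 2 t := by
          simpa using (hasDerivAt_id t).const_mul 2
        exact (d6.add d5).sub (d1.sub d2)
      rw [hd.deriv]
      have e1 : 1/(1+t) - (-1)/(1-t) = 2/(1-t^2) := by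
        field_simp
        ring
      rw [e1]
      have e2 : (2*(3*t^2)*(3*(1-t^2)) - 2*t^3*(3*(-(2*t))))/(3*(1-t^2))^2
          = (2*(3*t^2 - t^4))/(3*(1-t^2)^2) := by
        rw [div_eq_div_iff (by positivity) (by positivity)]
        ring
      rw [e2]
      have goal : 2 + (2*(3*t^2 - t^4))/(3*(1-t^2)^2) - 2/(1-t^2)
          = (4/3)*t^4/(1-t^2)^2 := by
        field_simp
        ring
      rw [goal]
      exact div_pos (by nlinarith [pow_pos ht.1 4]) (by positivity)
  have := key (Set.left_mem_Icc.2 hu0.le) (Set.right_mem_Icc.2 hu0.le) hu0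
  simp only [hf] at this
  simp at this
  linarith


noncomputable def gfun (x : ℝ) : ℝ := (x + 1/2) * (Real.log (x+1) - Real.log x) - 1

noncomputable def Ffun (x : ℝ) : ℝ :=
  Real.log (Real.Gamma x) - (x - 1/2) * Real.log x + x - Real.log (2*π) / 2

lemma log_sub_log (x : ℝ) (hx : 0 < x) :
    Real.log (x+1) - Real.log x = Real.log (1 + 1/(2*x+1)) - Real.log (1 - 1/(2*x+1)) := by
  set u := 1/(2*x+1) with hu
  have h1 : (0:ℝ) < 2*x+1 := by linarith
  have e1 : 1 + u = (2*x+2)/(2*x+1) := by rw [hu]; field_simp <;> ring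
  have e2 : 1 - u = (2*x)/(2*x+1) := by rw [hu]; field_simp <;> ring
  rw [e1, e2, Real.log_div (by positivity) h1.ne', Real.log_div (by positivity) h1.ne']
  have e3 : 2*x+2 = 2*(x+1) := by ring
  have e4 : (2:ℝ)*x = 2*x := rfl
  rw [e3, Real.log_mul two_ne_zero (by positivity), Real.log_mul two_ne_zero hx.ne']
  ring

lemma g_pos {x : ℝ} (hx : 0 < x) : 0 < gfun x := by
  have h1 : (0:ℝ) < 2*x+1 := by linarith
  have hu0 : (0:ℝ) < 1/(2*x+1) := by positivity
  have hu1 : 1/(2*x+1) < 1 := by rw [div_lt_one h1]; linarith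
  have key := log_ineq_lower hu0 hu1
  rw [gfun, log_sub_log x hx]
  have hx2 : x + 1/2 = (2*x+1)/2 := by ring
  set L := Real.log (1 + 1/(2*x+1)) - Real.log (1 - 1/(2*x+1)) with hL
  have hmul := mul_lt_mul_of_pos_left key (by positivity : (0:ℝ) < (2*x+1)/2)
  have h2 : (2*x+1)/2 * (2*(1/(2*x+1))) = 1 := by field_simp
  have h3 : (x+1/2) * L = (2*x+1)/2 * L := by rw [hx2]
  linarith

lemma g_lt {x : ℝ} (hx : 0 < x) : gfun x < 1/(12*x) - 1/(12*(x+1)) := by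
  have h1 : (0:ℝ) < 2*x+1 := by linarith
  set u := 1/(2*x+1) with hu
  have hu0 : (0:ℝ) < u := by positivity
  have hu1 : u < 1 := by rw [hu, div_lt_one h1]; linarith
  have key := log_ineq_upper hu0 hu1
  rw [gfun, log_sub_log x hx]
  have hx2 : x + 1/2 = 1/(2*u) := by rw [hu]; field_simp <;> ring
  have htel : 1/(12*x) - 1/(12*(x+1)) = u^2/(3*(1-u^2)) := by
    rw [hu]
    rw [div_sub_div _ _ (by positivity) (by positivity)]
    rw [div_eq_div_iff (by positivity) (by nlinarith)]
    field_simp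
    ring
  rw [htel, hx2]
  have h2 : (0:ℝ) < 1 - u^2 := by nlinarith
  calc 1/(2*u) * (Real.log (1+u) - Real.log (1-u)) - 1
      < 1/(2*u) * (2*u + 2*u^3/(3*(1-u^2))) - 1 := by
        have := mul_lt_mul_of_pos_left key (by positivity : (0:ℝ) < 1/(2*u))
        linarith
    _ = u^2/(3*(1-u^2)) := by field_simp; ring

lemma F_rec {x : ℝ} (hx : 0 < x) : Ffun x = gfun x + Ffun (x+1) := by
  have hG : Real.Gamma (x+1) = x * Real.Gamma x := Real.Gamma_add_one hx.ne'
  rw [Ffun, Ffun, gfun, hG, Real.log_mul hx.ne' (Real.Gamma_pos_of_pos hx).ne']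
  ring

lemma F_sum {x : ℝ} (hx : 0 < x) (n : ℕ) :
    Ffun x = (∑ k ∈ Finset.range n, gfun (x + k)) + Ffun (x + n) := by
  induction n with
  | zero => simp
  | succ n ih =>
      rw [Finset.sum_range_succ, ih]
      have hxn : (0:ℝ) < x + n := by positivity
      have := F_rec hxn
      push_cast
      rw [show x + (n+1 : ℝ) = (x + n) + 1 by ring]
      linarith


noncomputable def Dseq (n : ℕ) : ℝ :=
  Real.log (n.factorial) - ((n:ℝ) + 1/2) * Real.log n + n - Real.log (2*π) / 2

lemma Dseq_tendsto : Tendsto Dseq atTop (𝓝 0) := by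
  have h1 : Tendsto (fun n => Stirling.stirlingSeq n / Real.sqrt π) atTop (𝓝 1) := by
    have := Stirling.tendsto_stirlingSeq_sqrt_pi.div_const (Real.sqrt π)
    rwa [div_self (by positivity : Real.sqrt π ≠ 0)] at this
  have h2 : Tendsto (fun n => Real.log (Stirling.stirlingSeq n / Real.sqrt π)) atTop (𝓝 0) := by
    have := (Real.continuousAt_log one_ne_zero).tendsto.comp h1
    simpa [Function.comp_def] using this
  apply h2.congr'
  filter_upwards [eventually_ge_atTop 1] with n hn
  have hn0 : (0:ℝ) < n := by exact_mod_cast hn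
  have hfac : (0:ℝ) < n.factorial := by exact_mod_cast n.factorial_pos
  have hs : (0:ℝ) < Real.sqrt (2*n) := Real.sqrt_pos.2 (by positivity)
  have hp : (0:ℝ) < ((n:ℝ) / Real.exp 1) ^ n := by positivity
  rw [Stirling.stirlingSeq, Real.log_div (by positivity) (by positivity),
    Real.log_div (by positivity) (by positivity),
    Real.log_mul hs.ne' hp.ne', Real.log_sqrt (by positivity),
    Real.log_mul two_ne_zero hn0.ne', Real.log_pow,
    Real.log_div hn0.ne' (Real.exp_pos 1).ne', Real.log_exp, Real.sqrt_eq_rpow,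
    Real.log_rpow Real.pi_pos, Dseq, Real.log_mul two_ne_zero Real.pi_pos.ne']
  ring

lemma tendsto_F_nat {s : ℝ} (hs0 : 0 ≤ s) (hs1 : s < 1) :
    Tendsto (fun N : ℕ => Ffun (s + N)) atTop (𝓝 0) := by
  -- lower and upper auxiliary sequences
  set L : ℕ → ℝ := fun N => Dseq N - ((N:ℝ) + 1/2) * Real.log (1 + s/N) + s with hL
  set U : ℕ → ℝ := fun N => Dseq N - ((N:ℝ) + s - 1/2) * Real.log (1 + s/N) + s with hU
  have hlog0 : Tendsto (fun N : ℕ => Real.log (1 + s/N)) atTop (𝓝 0) := by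
    have : Tendsto (fun N : ℕ => 1 + s/N) atTop (𝓝 1) := by
      have := (tendsto_const_nhds (x := s)).div_atTop tendsto_natCast_atTop_atTop
      simpa using (tendsto_const_nhds (x := (1:ℝ))).add this
    have := (Real.continuousAt_log one_ne_zero).tendsto.comp this
    simpa [Function.comp_def] using this
  have hmul : Tendsto (fun N : ℕ => (N:ℝ) * Real.log (1 + s/N)) atTop (𝓝 s) :=
    (Real.tendsto_mul_log_one_add_div_atTop s).comp tendsto_natCast_atTop_atTop
  have hLlim : Tendsto L atTop (𝓝 0) := by
    have : Tendsto (fun N : ℕ => Dseq N - ((N:ℝ) * Real.log (1 + s/N)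
        + (1/2) * Real.log (1 + s/N)) + s) atTop (𝓝 (0 - (s + (1/2)*0) + s)) :=
      (Dseq_tendsto.sub (hmul.add (hlog0.const_mul (1/2)))).add tendsto_const_nhds
    simp only [mul_zero, add_zero, sub_add_cancel, zero_sub, neg_add_cancel] at this
    apply this.congr
    intro N
    simp only [hL]
    ring
  have hUlim : Tendsto U atTop (𝓝 0) := by
    have : Tendsto (fun N : ℕ => Dseq N - ((N:ℝ) * Real.log (1 + s/N)
        + (s - 1/2) * Real.log (1 + s/N)) + s) atTop (𝓝 (0 - (s + (s - 1/2)*0) + s)) :=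
      (Dseq_tendsto.sub (hmul.add (hlog0.const_mul (s - 1/2)))).add tendsto_const_nhds
    simp only [mul_zero, add_zero, sub_add_cancel, zero_sub, neg_add_cancel] at this
    apply this.congr
    intro N
    simp only [hU]
    ring
  apply tendsto_of_tendsto_of_tendsto_of_le_of_le' hLlim hUlim
  · -- L N ≤ Ffun (s + N) eventually
    filter_upwards [eventually_ge_atTop 1] with N hN
    have hN0 : (0:ℝ) < N := by exact_mod_cast hN
    have hNs : (0:ℝ) < N + s := by linarith
    have hfac : Real.Gamma ((N:ℝ) + 1) = N.factorial := Real.Gamma_nat_eq_factorial N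
    -- convexity: log Γ (N+1) ≤ s * log Γ (N+s) + (1-s) * log Γ (N+s+1)
    have hconv := Real.convexOn_log_Gamma.2 (Set.mem_Ioi.2 hNs)
      (Set.mem_Ioi.2 (by linarith : (0:ℝ) < (N:ℝ) + s + 1)) hs0 (by linarith : (0:ℝ) ≤ 1 - s)
      (by ring)
    have hcomb : s • ((N:ℝ) + s) + (1 - s) • ((N:ℝ) + s + 1) = (N:ℝ) + 1 := by
      simp only [smul_eq_mul]; ring
    rw [hcomb] at hconv
    simp only [Function.comp_apply, smul_eq_mul] at hconv
    have hGadd : Real.Gamma ((N:ℝ) + s + 1) = ((N:ℝ) + s) * Real.Gamma ((N:ℝ) + s) :=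
      Real.Gamma_add_one hNs.ne'
    rw [hfac, hGadd, Real.log_mul hNs.ne' (Real.Gamma_pos_of_pos hNs).ne'] at hconv
    -- hconv : log N! ≤ s * log Γ(N+s) + (1-s) * (log (N+s) + log Γ(N+s))
    have hlogG : Real.log (N.factorial) - (1 - s) * Real.log ((N:ℝ) + s)
        ≤ Real.log (Real.Gamma ((N:ℝ) + s)) := by nlinarith [hconv]
    -- now unfold
    have hlogsplit : Real.log ((N:ℝ) + s) = Real.log N + Real.log (1 + s/N) := by
      rw [← Real.log_mul hN0.ne' (by positivity : (1:ℝ) + s/N ≠ 0)]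
      congr 1
      field_simp
    rw [Ffun, hL]
    have hsN : s + (N:ℝ) = (N:ℝ) + s := by ring
    rw [hsN]
    simp only [Dseq]
    rw [hlogsplit]
    nlinarith [hlogG]
  · -- Ffun (s + N) ≤ U N eventually
    filter_upwards [eventually_ge_atTop 1] with N hN
    have hN0 : (0:ℝ) < N := by exact_mod_cast hN
    have hNs : (0:ℝ) < N + s := by linarith
    have hfacpos : (0:ℝ) < N.factorial := by exact_mod_cast N.factorial_pos
    have hGN : (N:ℝ) * Real.Gamma N = N.factorial := by
      rw [← Real.Gamma_add_one hN0.ne', Real.Gamma_nat_eq_factorial]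
    have hlogGN : Real.log (Real.Gamma (N:ℝ)) = Real.log N.factorial - Real.log N := by
      have h := Real.log_mul hN0.ne' (Real.Gamma_pos_of_pos hN0).ne'
      rw [hGN] at h
      linarith
    have hfac : Real.Gamma ((N:ℝ) + 1) = N.factorial := Real.Gamma_nat_eq_factorial N
    have hconv := Real.convexOn_log_Gamma.2 (Set.mem_Ioi.2 hN0)
      (Set.mem_Ioi.2 (by linarith : (0:ℝ) < (N:ℝ) + 1)) (by linarith : (0:ℝ) ≤ 1 - s) hs0
      (by ring)
    have hcomb : (1 - s) • ((N:ℝ)) + s • ((N:ℝ) + 1) = (N:ℝ) + s := by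
      simp only [smul_eq_mul]; ring
    rw [hcomb] at hconv
    simp only [Function.comp_apply, smul_eq_mul] at hconv
    rw [hfac, hlogGN] at hconv
    have hlogsplit : Real.log ((N:ℝ) + s) = Real.log N + Real.log (1 + s/N) := by
      rw [← Real.log_mul hN0.ne' (by positivity : (1:ℝ) + s/N ≠ 0)]
      congr 1
      field_simp
    rw [Ffun, hU]
    have hsN : s + (N:ℝ) = (N:ℝ) + s := by ring
    rw [hsN]
    simp only [Dseq]
    rw [hlogsplit]
    nlinarith [hconv]



lemma tendsto_F_shift {x : ℝ} (hx : 1 ≤ x) :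
    Tendsto (fun n : ℕ => Ffun (x + n)) atTop (𝓝 0) := by
  have hx0 : (0:ℝ) ≤ x := by linarith
  set m := Nat.floor x with hm
  set s := x - m with hs
  have hs0 : 0 ≤ s := by
    rw [hs]
    have := Nat.floor_le hx0
    linarith
  have hs1 : s < 1 := by
    rw [hs]
    have := Nat.lt_floor_add_one x
    linarith
  have key := (tendsto_F_nat hs0 hs1).comp (tendsto_add_atTop_nat m)
  apply key.congr
  intro n
  simp only [Function.comp_apply]
  congr 1
  push_cast
  rw [hs]
  ring

lemma F_nonneg_le {x : ℝ} (hx : 1 ≤ x) : 0 ≤ Ffun x ∧ Ffun x ≤ 1/(12*x) := by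
  have hx0 : (0:ℝ) < x := by linarith
  set S : ℕ → ℝ := fun n => ∑ k ∈ Finset.range n, gfun (x + k) with hS
  have hlim : Tendsto S atTop (𝓝 (Ffun x)) := by
    have h1 : Tendsto (fun n : ℕ => Ffun x - Ffun (x + n)) atTop (𝓝 (Ffun x - 0)) :=
      tendsto_const_nhds.sub (tendsto_F_shift hx)
    rw [sub_zero] at h1
    apply h1.congr
    intro n
    have := F_sum hx0 n
    simp only [hS]
    linarith
  constructor
  · apply ge_of_tendsto' hlim
    intro n
    apply Finset.sum_nonneg
    intro k _
    exact (g_pos (by positivity)).le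
  · apply le_of_tendsto' hlim
    intro n
    have htel : ∑ k ∈ Finset.range n, (1/(12*(x+k)) - 1/(12*(x+(k+1):ℝ)))
        = 1/(12*(x+(0:ℕ))) - 1/(12*(x+n)) := by
      have := Finset.sum_range_sub' (fun k : ℕ => 1/(12*(x+k))) n
      rw [← this]
      apply Finset.sum_congr rfl
      intro k _
      push_cast
      ring_nf
    have hle : S n ≤ 1/(12*(x+(0:ℕ))) - 1/(12*(x+n)) := by
      rw [← htel]
      apply Finset.sum_le_sum
      intro k _
      have := g_lt (x := x + k) (by positivity)
      have he : x + (k:ℝ) + 1 = x + ((k:ℝ)+1) := by ring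
      rw [he] at this
      exact this.le
    have h2 : 1/(12*(x+(0:ℕ))) - 1/(12*(x+n)) ≤ 1/(12*x) := by
      simp only [Nat.cast_zero, add_zero]
      have : (0:ℝ) < 12*(x+n) := by positivity
      have : 0 < 1/(12*(x+(n:ℝ))) := by positivity
      linarith
    linarith

lemma F_bounds {x : ℝ} (hx : 1 ≤ x) : 0 < Ffun x ∧ Ffun x < 1/(12*x) := by
  have hx0 : (0:ℝ) < x := by linarith
  have h1 := F_nonneg_le (x := x+1) (by linarith)
  have h2 := F_rec hx0
  have h3 := g_pos hx0
  have h4 := g_lt hx0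
  constructor
  · linarith [h1.1]
  · linarith [h1.2]

theorem stirling_two_sided (x : ℝ) (hx : 1 ≤ x) :
    1 < (2 * π) ^ (-(1/2) : ℝ) * x ^ ((1/2 : ℝ) - x) * Real.exp x * Real.Gamma x ∧
    (2 * π) ^ (-(1/2) : ℝ) * x ^ ((1/2 : ℝ) - x) * Real.exp x * Real.Gamma x
      < Real.exp (1 / (12 * x)) := by
  have hx0 : (0:ℝ) < x := by linarith
  have h2π : (0:ℝ) < 2*π := by positivity
  have key : (2 * π) ^ (-(1/2) : ℝ) * x ^ ((1/2 : ℝ) - x) * Real.exp x * Real.Gamma x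
      = Real.exp (Ffun x) := by
    rw [Real.rpow_def_of_pos h2π, Real.rpow_def_of_pos hx0,
      ← Real.exp_log (Real.Gamma_pos_of_pos hx0), ← Real.exp_add, ← Real.exp_add, ← Real.exp_add]
    congr 1
    rw [Ffun]
    ring
  obtain ⟨hb1, hb2⟩ := F_bounds hx
  rw [key]
  constructor
  · rw [← Real.exp_zero]
    exact Real.exp_lt_exp.2 hb1
  · exact Real.exp_lt_exp.2 hb2
end

section
/- Let a ≤ b be natural numbers, θ ∈ [−π, π] with θ ≠ 0, and 0 ≤ r ≤ 1. Then |∑_{k=a}^{b} r^{2k} cos(kθ)/k| ≤ 2π/(a·|θ|). -/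
open Real

/-- Abel summation inequality: strengthened inductive form. -/
lemma abel_key (a : ℕ) (c x : ℕ → ℝ) (M : ℝ)
    (hmono : ∀ k, a ≤ k → c (k + 1) ≤ c k)
    (hS : ∀ n, |∑ k ∈ Finset.Icc a n, x k| ≤ M) :
    ∀ b, a ≤ b →
      |(∑ k ∈ Finset.Icc a b, c k * x k) - c b * ∑ k ∈ Finset.Icc a b, x k|
        ≤ (c a - c b) * M := by
  intro b hb
  induction b, hb using Nat.le_induction with
  | base => simp
  | succ n hn ih =>
    have h1 : a ≤ n + 1 := le_trans hn (Nat.le_succ n)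
    rw [Finset.sum_Icc_succ_top h1 (fun k => c k * x k), Finset.sum_Icc_succ_top h1 x]
    have heq : (∑ k ∈ Finset.Icc a n, c k * x k) + c (n + 1) * x (n + 1)
        - c (n + 1) * ((∑ k ∈ Finset.Icc a n, x k) + x (n + 1))
        = ((∑ k ∈ Finset.Icc a n, c k * x k) - c n * ∑ k ∈ Finset.Icc a n, x k)
          + (c n - c (n + 1)) * ∑ k ∈ Finset.Icc a n, x k := by ring
    rw [heq]
    have h2 := abs_add_le ((∑ k ∈ Finset.Icc a n, c k * x k)
      - c n * ∑ k ∈ Finset.Icc a n, x k)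
      ((c n - c (n + 1)) * ∑ k ∈ Finset.Icc a n, x k)
    have h3 : |(c n - c (n + 1)) * ∑ k ∈ Finset.Icc a n, x k|
        ≤ (c n - c (n + 1)) * M := by
      rw [abs_mul, abs_of_nonneg (by linarith [hmono n hn])]
      exact mul_le_mul_of_nonneg_left (hS n) (by linarith [hmono n hn])
    have := ih
    nlinarith [this, h2, h3]

/-- Abel summation inequality. -/
lemma abel_bound (a : ℕ) (c x : ℕ → ℝ) (M : ℝ)
    (hc0 : ∀ k, 0 ≤ c k)
    (hmono : ∀ k, a ≤ k → c (k + 1) ≤ c k)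
    (hS : ∀ n, |∑ k ∈ Finset.Icc a n, x k| ≤ M) :
    ∀ b, a ≤ b → |∑ k ∈ Finset.Icc a b, c k * x k| ≤ c a * M := by
  intro b hb
  have key := abel_key a c x M hmono hS b hb
  have h1 : |c b * ∑ k ∈ Finset.Icc a b, x k| ≤ c b * M := by
    rw [abs_mul, abs_of_nonneg (hc0 b)]
    exact mul_le_mul_of_nonneg_left (hS b) (hc0 b)
  calc |∑ k ∈ Finset.Icc a b, c k * x k|
      ≤ |(∑ k ∈ Finset.Icc a b, c k * x k) - c b * ∑ k ∈ Finset.Icc a b, x k|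
        + |c b * ∑ k ∈ Finset.Icc a b, x k| := by
        have := abs_sub_abs_le_abs_sub (∑ k ∈ Finset.Icc a b, c k * x k)
          (c b * ∑ k ∈ Finset.Icc a b, x k)
        have := abs_add_le ((∑ k ∈ Finset.Icc a b, c k * x k)
          - c b * ∑ k ∈ Finset.Icc a b, x k) (c b * ∑ k ∈ Finset.Icc a b, x k)
        simpa using this
    _ ≤ (c a - c b) * M + c b * M := add_le_add key h1
    _ = c a * M := by ring

/-- Bound on partial sums of cosines. -/
lemma cos_partial_sum_bound (a n : ℕ) (θ : ℝ)
    (hθ : θ ∈ Set.Icc (-π) π) (hθ0 : θ ≠ 0) :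
    |∑ k ∈ Finset.Icc a n, Real.cos (k * θ)| ≤ π / |θ| := by
  obtain ⟨hθl, hθu⟩ := hθ
  have hθabs : 0 < |θ| := abs_pos.mpr hθ0
  have hθπ : |θ| ≤ π := abs_le.mpr ⟨hθl, hθu⟩
  have hπ : (0:ℝ) < π := Real.pi_pos
  rcases lt_or_ge n a with h | han
  · rw [Finset.Icc_eq_empty (by omega)]
    simp [le_div_iff₀ hθabs]
    positivity
  -- set up complex exponential
  set z : ℂ := Complex.exp (θ * Complex.I) with hz
  have hzabs : ‖z‖ = 1 := Complex.norm_exp_ofReal_mul_I θ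
  have hz1 : z ≠ 1 := by
    intro h
    rw [hz, Complex.exp_eq_one_iff] at h
    obtain ⟨m, hm⟩ := h
    have hθc : (θ : ℂ) = (m : ℂ) * (2 * π) :=
      mul_right_cancel₀ Complex.I_ne_zero
        (by rw [hm]; ring)
    have hθm : θ = m * (2 * π) := by exact_mod_cast hθc
    rcases eq_or_ne m 0 with rfl | hm0
    · simp at hθm; exact hθ0 hθm
    · have h2π : (2:ℝ) * π ≤ |θ| := by
        rw [hθm, abs_mul, abs_of_pos (by positivity : (0:ℝ) < 2 * π)]
        have h1m : (1:ℤ) ≤ |m| := Int.one_le_abs hm0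
        have : (1:ℝ) ≤ |(m:ℝ)| := by exact_mod_cast h1m
        nlinarith
      linarith
  -- lower bound on |z - 1|
  have hsin : |θ| / π ≤ |Real.sin (θ / 2)| := by
    have h1 : 2 / π * (|θ| / 2) ≤ Real.sin (|θ| / 2) :=
      Real.mul_le_sin (by positivity) (by linarith)
    have h2 : Real.sin (|θ| / 2) ≤ |Real.sin (θ / 2)| := by
      rcases abs_choice θ with h | h
      · rw [h]; exact le_abs_self _
      · rw [h]
        rw [show -θ / 2 = -(θ / 2) by ring, Real.sin_neg]
        exact neg_le_abs _
    calc |θ| / π = 2 / π * (|θ| / 2) := by field_simp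
      _ ≤ Real.sin (|θ| / 2) := h1
      _ ≤ |Real.sin (θ / 2)| := h2
  have hz1abs : 2 * (|θ| / π) ≤ ‖z - 1‖ := by
    have hnorm : ‖z - 1‖ ^ 2 = (2 * |Real.sin (θ / 2)|) ^ 2 := by
      have hre : (z - 1).re = Real.cos θ - 1 := by
        simp [hz, Complex.exp_ofReal_mul_I_re]
      have him : (z - 1).im = Real.sin θ := by
        simp [hz, Complex.exp_ofReal_mul_I_im]
      have hsq : ‖z - 1‖ ^ 2 = (Real.cos θ - 1) ^ 2 + Real.sin θ ^ 2 := by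
        rw [Complex.sq_norm, Complex.normSq_apply, hre, him]; ring
      have hcos : (Real.cos θ - 1) ^ 2 + Real.sin θ ^ 2 = 2 - 2 * Real.cos θ := by
        nlinarith [Real.sin_sq_add_cos_sq θ]
      have hhalf : 2 - 2 * Real.cos θ = (2 * |Real.sin (θ / 2)|) ^ 2 := by
        have := Real.sin_sq_eq_half_sub (θ / 2)
        rw [show 2 * (θ / 2) = θ by ring] at this
        rw [show (2 * |Real.sin (θ / 2)|) ^ 2 = 4 * |Real.sin (θ / 2)| ^ 2 by ring,
          sq_abs]
        linarith
      rw [hsq, hcos, hhalf]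
    nlinarith [norm_nonneg (z - 1), abs_nonneg (Real.sin (θ / 2)), hsin,
      hθabs.le, hπ]
  have hz1pos : 0 < ‖z - 1‖ := by
    have : 0 < 2 * (|θ| / π) := by positivity
    linarith
  -- the sum as complex geometric sum
  have hsum : ∑ k ∈ Finset.Icc a n, Real.cos (k * θ)
      = (∑ k ∈ Finset.Icc a n, z ^ k).re := by
    rw [Complex.re_sum]
    apply Finset.sum_congr rfl
    intro k _
    rw [hz, ← Complex.exp_nat_mul]
    rw [show (k : ℂ) * (θ * Complex.I) = ((k * θ : ℝ) : ℂ) * Complex.I by push_cast; ring]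
    rw [Complex.exp_ofReal_mul_I_re]
  have hgeom : ∑ k ∈ Finset.Icc a n, z ^ k = (z ^ (n + 1) - z ^ a) / (z - 1) := by
    rw [← Finset.Ico_add_one_right_eq_Icc, geom_sum_Ico hz1 (by omega)]
  have habs2 : ‖∑ k ∈ Finset.Icc a n, z ^ k‖ ≤ 2 / ‖z - 1‖ := by
    rw [hgeom, norm_div]
    refine (div_le_div_iff_of_pos_right hz1pos).mpr ?_
    calc ‖z ^ (n + 1) - z ^ a‖
        ≤ ‖z ^ (n + 1)‖ + ‖z ^ a‖ := by
          exact (norm_sub_le _ _)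
      _ = 2 := by rw [norm_pow, norm_pow, hzabs]; norm_num
  calc |∑ k ∈ Finset.Icc a n, Real.cos (k * θ)|
      = |(∑ k ∈ Finset.Icc a n, z ^ k).re| := by rw [hsum]
    _ ≤ ‖∑ k ∈ Finset.Icc a n, z ^ k‖ := Complex.abs_re_le_norm _
    _ ≤ 2 / ‖z - 1‖ := habs2
    _ ≤ 2 / (2 * (|θ| / π)) := by
        apply div_le_div_of_nonneg_left (by norm_num) (by positivity) hz1abs
    _ = π / |θ| := by field_simp
    _ ≤ π / |θ| := le_refl _

theorem cosine_sum_bound (a b : ℕ) (ha : 1 ≤ a) (hab : a ≤ b) (θ r : ℝ)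
    (hθ : θ ∈ Set.Icc (-π) π) (hθ0 : θ ≠ 0) (hr0 : 0 ≤ r) (hr1 : r ≤ 1) :
    |∑ k ∈ Finset.Icc a b, r ^ (2 * k) * Real.cos (k * θ) / k| ≤ 2 * π / (a * |θ|) := by
  have hθabs : 0 < |θ| := abs_pos.mpr hθ0
  have hπ : (0:ℝ) < π := Real.pi_pos
  have ha' : (0:ℝ) < a := by exact_mod_cast ha
  set c : ℕ → ℝ := fun k => r ^ (2 * k) / k with hc
  set x : ℕ → ℝ := fun k => Real.cos (k * θ) with hx
  have hc0 : ∀ k, 0 ≤ c k := fun k => by positivity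
  have hmono : ∀ k, a ≤ k → c (k + 1) ≤ c k := by
    intro k hk
    have hk0 : (0:ℝ) < k := by
      have : 1 ≤ k := le_trans ha hk
      exact_mod_cast this
    simp only [hc]
    apply div_le_div₀ (by positivity) ?_ hk0 (by push_cast; linarith)
    exact pow_le_pow_of_le_one hr0 hr1 (by omega)
  have hS : ∀ n, |∑ k ∈ Finset.Icc a n, x k| ≤ π / |θ| := fun n =>
    cos_partial_sum_bound a n θ hθ hθ0
  have key := abel_bound a c x (π / |θ|) hc0 hmono hS b hab
  have heq : ∑ k ∈ Finset.Icc a b, r ^ (2 * k) * Real.cos (k * θ) / k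
      = ∑ k ∈ Finset.Icc a b, c k * x k := by
    apply Finset.sum_congr rfl
    intro k _
    simp only [hc, hx]
    ring
  rw [heq]
  have hca : c a ≤ 1 / a := by
    simp only [hc]
    exact div_le_div₀ zero_le_one (pow_le_one₀ hr0 hr1) ha' le_rfl
  calc |∑ k ∈ Finset.Icc a b, c k * x k| ≤ c a * (π / |θ|) := key
    _ ≤ (1 / a) * (π / |θ|) := by
        apply mul_le_mul_of_nonneg_right hca (by positivity)
    _ ≤ 2 * π / (a * |θ|) := by
        rw [div_mul_div_comm, one_mul]
        apply div_le_div₀ (by positivity) (by linarith) (by positivity) (le_refl _)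
end

section
/- There exists a constant C > 0 such that for every q ∈ (0, 1), the series ∑_{j=1}^∞ 2^{jq} exp(−(1−q)·2^{j−1}) converges and is at most C · (1−q)^{−q}. -/
open Real

set_option maxHeartbeats 1600000 in
theorem geometric_exponential_sum_bound :
    ∃ C : ℝ, 0 < C ∧ ∀ q : ℝ, q ∈ Set.Ioo (0:ℝ) 1 →
      Summable (fun j : ℕ => (2:ℝ) ^ (((j:ℝ) + 1) * q) * Real.exp (-(1 - q) * 2 ^ (j:ℝ))) ∧
      (∑' j : ℕ, (2:ℝ) ^ (((j:ℝ) + 1) * q) * Real.exp (-(1 - q) * 2 ^ (j:ℝ)))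
        ≤ C * (1 - q) ^ (-q) := by
  refine ⟨48, by norm_num, ?_⟩
  rintro q ⟨hq0, hq1⟩
  set ε : ℝ := 1 - q with hεdef
  have hε0 : 0 < ε := by simp only [hεdef]; linarith
  have hε1 : ε < 1 := by simp only [hεdef]; linarith
  -- find minimal j0 with 1 ≤ ε * 2^j0
  have hex : ∃ n : ℕ, 1 ≤ ε * 2 ^ n := by
    obtain ⟨n, hn⟩ := pow_unbounded_of_one_lt (1 / ε) (by norm_num : (1:ℝ) < 2)
    exact ⟨n, by rw [← div_le_iff₀' hε0]; exact hn.le⟩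
  classical
  obtain ⟨j0, hj0, hmin⟩ : ∃ j0 : ℕ, 1 ≤ ε * 2 ^ j0 ∧ ∀ j < j0, ε * 2 ^ j < 1 :=
    ⟨Nat.find hex, Nat.find_spec hex, fun j hj => not_le.mp (Nat.find_min hex hj)⟩
  have hj0pos : 0 < j0 := by
    rcases Nat.eq_zero_or_pos j0 with h | h
    · exfalso; have := hj0; rw [h] at this; simp at this; linarith
    · exact h
  have hj0lt : ε * 2 ^ j0 < 2 := by
    obtain ⟨m, hm⟩ := Nat.exists_eq_succ_of_ne_zero hj0pos.ne'
    have := hmin m (by omega)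
    rw [hm, pow_succ]
    nlinarith [this]
  -- the comparison sequence
  set c : ℕ → ℝ := fun j => if j < j0 then (ε * 2 ^ j) ^ ((1:ℝ)/2) else 4 / (ε * 2 ^ j)
    with hcdef
  have hy0 : ∀ j : ℕ, (0:ℝ) < ε * 2 ^ j := fun j => by positivity
  have hc0 : ∀ j, 0 ≤ c j := by
    intro j
    simp only [hcdef]
    split
    · positivity
    · positivity
  -- pointwise key bound
  have hεq : (0:ℝ) < ε ^ (-q) := rpow_pos_of_pos hε0 _
  have key : ∀ j : ℕ, (2:ℝ) ^ (((j:ℝ) + 1) * q) * Real.exp (-(1 - q) * 2 ^ (j:ℝ))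
      ≤ 4 * ε ^ (-q) * c j := by
    intro j
    have hN : (2:ℝ) ^ ((j:ℝ)) = (2:ℝ) ^ j := rpow_natCast 2 j
    set y : ℝ := ε * 2 ^ j with hydef
    have hy : 0 < y := hy0 j
    -- rewrite the term
    have h1 : (2:ℝ) ^ (((j:ℝ) + 1) * q) = ((2:ℝ) * 2 ^ j) ^ q := by
      rw [rpow_mul (by norm_num : (0:ℝ) ≤ 2)]
      congr 1
      rw [rpow_add (by norm_num : (0:ℝ) < 2), rpow_one, hN, mul_comm]
    have h2 : ((2:ℝ) * 2 ^ j) ^ q = 2 ^ q * ((2:ℝ) ^ j) ^ q :=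
      mul_rpow (by norm_num) (by positivity)
    have h3 : ((2:ℝ) ^ j) ^ q = ε ^ (-q) * y ^ q := by
      rw [hydef, mul_rpow hε0.le (by positivity), rpow_neg hε0.le, ← mul_assoc,
        inv_mul_cancel₀ (by positivity : (ε:ℝ) ^ q ≠ 0), one_mul]
    have h4 : Real.exp (-(1 - q) * 2 ^ (j:ℝ)) = Real.exp (-y) := by
      rw [hN]; congr 1; rw [hydef, ← hεdef]; ring
    rw [h1, h2, h3, h4]
    have h2q : (2:ℝ) ^ q ≤ 2 := by
      calc (2:ℝ) ^ q ≤ 2 ^ (1:ℝ) := rpow_le_rpow_of_exponent_le (by norm_num) hq1.le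
      _ = 2 := rpow_one 2
    have hcore : y ^ q * Real.exp (-y) ≤ 2 * c j := by
      simp only [hcdef]
      split
      · -- j < j0 : y < 1, bound by 2 * y^(1/2)
        rename_i hj
        have hylt : y < 1 := hmin j hj
        have hexp : Real.exp (-y) ≤ 1 := exp_le_one_iff.mpr (by linarith)
        rw [← hydef]
        rcases le_or_gt (1/2 : ℝ) q with hq | hq
        · have h' : y ^ q ≤ y ^ ((1:ℝ)/2) := rpow_le_rpow_of_exponent_ge hy hylt.le hq
          have := mul_le_mul h' hexp (exp_pos (-y)).le (rpow_nonneg hy.le ((1:ℝ)/2))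
          nlinarith [rpow_nonneg hy.le ((1:ℝ)/2)]
        · -- q < 1/2, so ε > 1/2 and y ≥ 1/2
          have hyge : (1/2 : ℝ) ≤ y := by
            have h2j : (1:ℝ) ≤ 2 ^ j := one_le_pow₀ (by norm_num)
            have : ε > 1/2 := by simp only [hεdef]; linarith
            rw [hydef]; nlinarith
          have hq1' : y ^ q ≤ 1 := rpow_le_one hy.le hylt.le hq0.le
          have hhalf : (1/2 : ℝ) ≤ y ^ ((1:ℝ)/2) := by
            calc (1/2 : ℝ) = (1/2 : ℝ) ^ (1:ℝ) := by rw [rpow_one]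
            _ ≤ (1/2 : ℝ) ^ ((1:ℝ)/2) := rpow_le_rpow_of_exponent_ge (by norm_num) (by norm_num) (by norm_num)
            _ ≤ y ^ ((1:ℝ)/2) := rpow_le_rpow (by norm_num) hyge (by norm_num)
          have := mul_le_one₀ hq1' (exp_pos (-y)).le hexp
          linarith
      · -- j ≥ j0 : y ≥ 1, bound by 8 / y
        rename_i hj
        push_neg at hj
        have hyge : (1:ℝ) ≤ y := by
          calc (1:ℝ) ≤ ε * 2 ^ j0 := hj0
          _ ≤ ε * 2 ^ j := by
              have : (2:ℝ) ^ j0 ≤ 2 ^ j := pow_le_pow_right₀ (by norm_num) hj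
              nlinarith
        have hq' : y ^ q ≤ y := by
          calc y ^ q ≤ y ^ (1:ℝ) := rpow_le_rpow_of_exponent_le hyge hq1.le
          _ = y := rpow_one y
        have hey : y ^ 2 ≤ 4 * Real.exp y := by
          have h := add_one_le_exp (y/2)
          have h2 : y / 2 ≤ Real.exp (y/2) := by linarith
          have h3 : Real.exp (y/2) * Real.exp (y/2) = Real.exp y := by
            rw [← Real.exp_add]; ring_nf
          nlinarith [exp_pos (y/2)]
        have h8 : y ^ q * Real.exp (-y) ≤ 8 / y := by
          rw [Real.exp_neg, ← div_eq_mul_inv, div_le_div_iff₀ (exp_pos y) hy]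
          nlinarith [mul_le_mul_of_nonneg_right hq' hy.le, hey, (exp_pos y).le]
        calc y ^ q * Real.exp (-y) ≤ 8 / y := h8
          _ = 2 * (4 / (ε * 2 ^ j)) := by rw [← hydef]; ring
    calc (2:ℝ) ^ q * (ε ^ (-q) * y ^ q) * Real.exp (-y)
        = 2 ^ q * ε ^ (-q) * (y ^ q * Real.exp (-y)) := by ring
      _ ≤ 2 * ε ^ (-q) * (2 * c j) := by
          apply mul_le_mul
          · exact mul_le_mul_of_nonneg_right h2q hεq.le
          · exact hcore
          · positivity
          · positivity
      _ = 4 * ε ^ (-q) * c j := by ring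
  -- auxiliary: s = sqrt 2
  set s : ℝ := (2:ℝ) ^ ((1:ℝ)/2) with hsdef
  have hs_pos : 0 < s := rpow_pos_of_pos (by norm_num) _
  have hs2 : s ^ 2 = 2 := by
    rw [hsdef, ← rpow_natCast ((2:ℝ) ^ ((1:ℝ)/2)) 2, ← rpow_mul (by norm_num : (0:ℝ) ≤ 2)]
    norm_num
  have hs_lb : (7:ℝ)/5 ≤ s := by nlinarith
  have hs_ub : s ≤ (3:ℝ)/2 := by nlinarith
  have hpow : ∀ j : ℕ, ((2:ℝ) ^ j) ^ ((1:ℝ)/2) = s ^ j := by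
    intro j
    rw [hsdef, ← rpow_natCast (2:ℝ) j, ← rpow_mul (by norm_num : (0:ℝ) ≤ 2),
      ← rpow_natCast ((2:ℝ) ^ ((1:ℝ)/2)) j, ← rpow_mul (by norm_num : (0:ℝ) ≤ 2), mul_comm]
  -- summability of c
  have hce : (fun n : ℕ => c (n + j0)) = fun n : ℕ => (4 / (ε * 2 ^ j0)) * (1/2 : ℝ) ^ n := by
    funext n
    simp only [hcdef]
    rw [if_neg (Nat.not_lt.mpr (Nat.le_add_left j0 n))]
    rw [pow_add]
    have hre : ε * ((2:ℝ) ^ n * 2 ^ j0) = (ε * 2 ^ j0) * 2 ^ n := by ring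
    rw [hre, ← div_div, div_pow, one_pow, mul_one_div]
  have hcs_tail : Summable (fun n : ℕ => c (n + j0)) := by
    rw [hce]; exact summable_geometric_two.mul_left _
  have hcs : Summable c := (summable_nat_add_iff j0).mp hcs_tail
  -- tail sum bound
  have htail : ∑' n : ℕ, c (n + j0) ≤ 8 := by
    rw [hce, tsum_mul_left, tsum_geometric_two]
    have hx : (1:ℝ) ≤ ε * 2 ^ j0 := hj0
    rw [div_mul_eq_mul_div, div_le_iff₀ (hy0 j0)]
    nlinarith
  -- finite sum bound
  have hfin : ∑ j ∈ Finset.range j0, c j ≤ 4 := by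
    have hterm : ∀ j ∈ Finset.range j0, c j = ε ^ ((1:ℝ)/2) * s ^ j := by
      intro j hj
      rw [Finset.mem_range] at hj
      simp only [hcdef]
      rw [if_pos hj, mul_rpow hε0.le (by positivity), hpow]
    rw [Finset.sum_congr rfl hterm, ← Finset.mul_sum,
      geom_sum_eq (by intro h; rw [h] at hs_lb; norm_num at hs_lb) j0]
    have hεs : ε ^ ((1:ℝ)/2) * s ^ j0 = (ε * 2 ^ j0) ^ ((1:ℝ)/2) := by
      rw [mul_rpow hε0.le (by positivity), hpow]
    have hnum : ε ^ ((1:ℝ)/2) * s ^ j0 ≤ (3:ℝ)/2 := by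
      rw [hεs]
      calc (ε * 2 ^ j0) ^ ((1:ℝ)/2) ≤ (2:ℝ) ^ ((1:ℝ)/2) :=
            rpow_le_rpow (hy0 j0).le hj0lt.le (by norm_num)
        _ = s := hsdef.symm
        _ ≤ 3/2 := hs_ub
    rw [mul_div_assoc', div_le_iff₀ (by linarith : (0:ℝ) < s - 1)]
    have hε12 : (0:ℝ) ≤ ε ^ ((1:ℝ)/2) := rpow_nonneg hε0.le _
    nlinarith
  have hsumc : ∑' j, c j ≤ 12 := by
    rw [← Summable.sum_add_tsum_nat_add j0 hcs]
    linarith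
  -- conclude
  have hbs : Summable (fun j : ℕ => 4 * ε ^ (-q) * c j) := hcs.mul_left _
  have hnn : ∀ j : ℕ, 0 ≤ (2:ℝ) ^ (((j:ℝ) + 1) * q) * Real.exp (-(1 - q) * 2 ^ (j:ℝ)) := by
    intro j; positivity
  have hsummable : Summable (fun j : ℕ =>
      (2:ℝ) ^ (((j:ℝ) + 1) * q) * Real.exp (-(1 - q) * 2 ^ (j:ℝ))) :=
    Summable.of_nonneg_of_le hnn key hbs
  refine ⟨hsummable, ?_⟩
  calc (∑' j : ℕ, (2:ℝ) ^ (((j:ℝ) + 1) * q) * Real.exp (-(1 - q) * 2 ^ (j:ℝ)))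
      ≤ ∑' j : ℕ, 4 * ε ^ (-q) * c j := Summable.tsum_le_tsum key hsummable hbs
    _ = 4 * ε ^ (-q) * ∑' j, c j := tsum_mul_left
    _ ≤ 4 * ε ^ (-q) * 12 := by
        exact mul_le_mul_of_nonneg_left hsumc (by positivity)
    _ = 48 * ε ^ (-q) := by ring
end

section
/- There exist constants 0 < c < C such that for every integer m ≥ 1, c · m^{−1/2} · Γ(m+1) ≤ ∫_m^{m+1} e^{−x} x^m dx ≤ C · m^{−1/2} · Γ(m+1). That is, the integral of the Gamma density e^{−x} x^m over the unit interval [m, m+1] around its mode is of order m^{−1/2} times the full Gamma integral ∫_0^∞ e^{−x} x^m dx = m!. -/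
open Real

lemma aux_pointwise_upper {m : ℕ} (hm : 1 ≤ m) {x : ℝ} (hx : (m : ℝ) ≤ x) :
    Real.exp (-x) * x ^ m ≤ Real.exp (-(m : ℝ)) * (m : ℝ) ^ m := by
  have hm0 : (0 : ℝ) < m := by exact_mod_cast hm
  have hx0 : (0 : ℝ) ≤ x := le_trans hm0.le hx
  have h1 : x / m ≤ Real.exp (x / m - 1) := by
    have := Real.add_one_le_exp (x / m - 1)
    linarith
  have h2 : (x / m) ^ m ≤ Real.exp (x / m - 1) ^ m :=
    pow_le_pow_left₀ (by positivity) h1 m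
  have h3 : Real.exp (x / m - 1) ^ m = Real.exp (x - m) := by
    rw [← Real.exp_nat_mul]
    congr 1
    field_simp
  have h4 : x ^ m ≤ Real.exp (x - m) * (m : ℝ) ^ m := by
    have := mul_le_mul_of_nonneg_right (h3 ▸ h2) (by positivity : (0:ℝ) ≤ (m:ℝ) ^ m)
    calc x ^ m = (x / m) ^ m * (m : ℝ) ^ m := by
          rw [div_pow]; field_simp
      _ ≤ Real.exp (x - m) * (m : ℝ) ^ m := this
  calc Real.exp (-x) * x ^ m ≤ Real.exp (-x) * (Real.exp (x - m) * (m : ℝ) ^ m) := by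
        exact mul_le_mul_of_nonneg_left h4 (Real.exp_pos _).le
    _ = Real.exp (-(m : ℝ)) * (m : ℝ) ^ m := by
        rw [← mul_assoc, ← Real.exp_add]; ring_nf

theorem gamma_density_unit_interval_mass :
    ∃ c C : ℝ, 0 < c ∧ c < C ∧ ∀ m : ℕ, 1 ≤ m →
      c * (m : ℝ) ^ (-(1/2) : ℝ) * Real.Gamma (m + 1)
          ≤ ∫ x in (m : ℝ)..((m : ℝ) + 1), Real.exp (-x) * x ^ m ∧
      (∫ x in (m : ℝ)..((m : ℝ) + 1), Real.exp (-x) * x ^ m)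
          ≤ C * (m : ℝ) ^ (-(1/2) : ℝ) * Real.Gamma (m + 1) := by
  obtain ⟨a, ha, hab⟩ := Stirling.stirlingSeq'_bounded_by_pos_constant
  refine ⟨Real.exp (-2), 1 / (a * Real.sqrt 2) + 1, Real.exp_pos _, ?_, ?_⟩
  · have h1 : Real.exp (-2) < 1 := by
      rw [Real.exp_lt_one_iff]; norm_num
    have : (0:ℝ) < 1 / (a * Real.sqrt 2) := by positivity
    linarith
  intro m hm
  have hm0 : (0 : ℝ) < m := by exact_mod_cast hm
  -- Stirling sequence bounds
  set s := Stirling.stirlingSeq m with hs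
  have hsa : a ≤ s := by
    have h := hab (m - 1)
    rwa [Nat.sub_add_cancel hm] at h
  have hsub : s ≤ Real.exp 1 / Real.sqrt 2 := by
    have h := Stirling.stirlingSeq'_antitone (Nat.zero_le (m - 1))
    simp only [Function.comp, Nat.succ_eq_add_one, zero_add] at h
    rw [Nat.sub_add_cancel hm] at h
    rwa [Stirling.stirlingSeq_one] at h
  have hspos : 0 < s := lt_of_lt_of_le ha hsa
  -- factorial identity
  have hden : (0:ℝ) < Real.sqrt (2 * m) * ((m : ℝ) / Real.exp 1) ^ m := by positivity
  have hfact : (Nat.factorial m : ℝ) = s * (Real.sqrt (2 * m) * ((m : ℝ) / Real.exp 1) ^ m) := by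
    rw [hs, Stirling.stirlingSeq, div_mul_cancel₀ _ hden.ne']
  -- Gamma
  have hGamma : Real.Gamma ((m : ℝ) + 1) = (Nat.factorial m : ℝ) := Real.Gamma_nat_eq_factorial m
  -- integral bounds
  have hcont : IntervalIntegrable (fun x => Real.exp (-x) * x ^ m) MeasureTheory.volume
      (m : ℝ) ((m : ℝ) + 1) := by
    apply Continuous.intervalIntegrable
    continuity
  have hlow : Real.exp (-((m : ℝ) + 1)) * (m : ℝ) ^ m
      ≤ ∫ x in (m : ℝ)..((m : ℝ) + 1), Real.exp (-x) * x ^ m := by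
    have h := intervalIntegral.integral_mono_on
      (f := fun _ : ℝ => Real.exp (-((m : ℝ) + 1)) * (m : ℝ) ^ m)
      (g := fun x : ℝ => Real.exp (-x) * x ^ m)
      (by linarith : (m:ℝ) ≤ (m:ℝ)+1)
      intervalIntegrable_const hcont (fun x hx => by
        obtain ⟨hx1, hx2⟩ := hx
        have he : Real.exp (-((m:ℝ)+1)) ≤ Real.exp (-x) := Real.exp_le_exp.mpr (by linarith)
        have h2 : (m : ℝ) ^ m ≤ x ^ m := pow_le_pow_left₀ hm0.le hx1 m
        exact mul_le_mul he h2 (by positivity) (Real.exp_pos _).le)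
    simpa using h
  have hhigh : (∫ x in (m : ℝ)..((m : ℝ) + 1), Real.exp (-x) * x ^ m)
      ≤ Real.exp (-(m : ℝ)) * (m : ℝ) ^ m := by
    have h := intervalIntegral.integral_mono_on
      (f := fun x : ℝ => Real.exp (-x) * x ^ m)
      (g := fun _ : ℝ => Real.exp (-(m : ℝ)) * (m : ℝ) ^ m)
      (by linarith : (m:ℝ) ≤ (m:ℝ)+1)
      hcont intervalIntegrable_const (fun x hx => aux_pointwise_upper hm hx.1)
    simpa using h
  -- rewrite m ^ (-(1/2)) as 1/√m
  have hrpow : (m : ℝ) ^ (-(1/2) : ℝ) = (Real.sqrt m)⁻¹ := by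
    rw [Real.rpow_neg hm0.le, Real.sqrt_eq_rpow]
  have hsqm : (0:ℝ) < Real.sqrt m := Real.sqrt_pos.mpr hm0
  have hsq2 : (0:ℝ) < Real.sqrt 2 := by positivity
  have hsplit : Real.sqrt (2 * m) = Real.sqrt 2 * Real.sqrt m := Real.sqrt_mul (by norm_num) _
  have hdivpow : ((m : ℝ) / Real.exp 1) ^ m = (m : ℝ) ^ m * Real.exp (-(m:ℝ)) := by
    rw [div_pow, ← Real.exp_nat_mul, mul_one, Real.exp_neg]
    ring
  constructor
  · refine le_trans ?_ hlow
    rw [hGamma, hfact, hrpow, hsplit, hdivpow]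
    have key : Real.exp (-2) * s * Real.sqrt 2 ≤ Real.exp (-(1:ℝ)) := by
      have h1 : s * Real.sqrt 2 ≤ Real.exp 1 := by
        have := (le_div_iff₀ hsq2).mp hsub
        linarith
      calc Real.exp (-2) * s * Real.sqrt 2 ≤ Real.exp (-2) * Real.exp 1 := by
            rw [mul_assoc]
            exact mul_le_mul_of_nonneg_left h1 (Real.exp_pos _).le
        _ = Real.exp (-(1:ℝ)) := by rw [← Real.exp_add]; norm_num
    have hEm : Real.exp (-((m:ℝ)+1)) = Real.exp (-(m:ℝ)) * Real.exp (-(1:ℝ)) := by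
      rw [← Real.exp_add]; ring_nf
    rw [hEm]
    have expand : Real.exp (-2) * (Real.sqrt m)⁻¹ *
        (s * (Real.sqrt 2 * Real.sqrt m * ((m:ℝ) ^ m * Real.exp (-(m:ℝ)))))
        = (Real.exp (-2) * s * Real.sqrt 2) * ((m:ℝ) ^ m * Real.exp (-(m:ℝ))) := by
      field_simp
    rw [expand]
    calc (Real.exp (-2) * s * Real.sqrt 2) * ((m:ℝ) ^ m * Real.exp (-(m:ℝ)))
        ≤ Real.exp (-(1:ℝ)) * ((m:ℝ) ^ m * Real.exp (-(m:ℝ))) :=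
          mul_le_mul_of_nonneg_right key (by positivity)
      _ = Real.exp (-(m:ℝ)) * Real.exp (-(1:ℝ)) * (m:ℝ) ^ m := by ring
  · refine le_trans hhigh ?_
    rw [hGamma, hfact, hrpow, hsplit, hdivpow]
    have key : (1:ℝ) ≤ (1 / (a * Real.sqrt 2) + 1) * (s * Real.sqrt 2) := by
      have h1 : (1:ℝ) ≤ 1 / (a * Real.sqrt 2) * (s * Real.sqrt 2) := by
        rw [div_mul_eq_mul_div, one_mul, le_div_iff₀ (by positivity)]
        have := mul_le_mul_of_nonneg_right hsa hsq2.le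
        linarith
      have h2 : (0:ℝ) < s * Real.sqrt 2 := by positivity
      nlinarith
    have expand : (1 / (a * Real.sqrt 2) + 1) * (Real.sqrt m)⁻¹ *
        (s * (Real.sqrt 2 * Real.sqrt m * ((m:ℝ) ^ m * Real.exp (-(m:ℝ)))))
        = ((1 / (a * Real.sqrt 2) + 1) * (s * Real.sqrt 2)) * ((m:ℝ) ^ m * Real.exp (-(m:ℝ))) := by
      field_simp
    rw [expand]
    calc Real.exp (-(m:ℝ)) * (m:ℝ) ^ m
        = 1 * ((m:ℝ) ^ m * Real.exp (-(m:ℝ))) := by ring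
      _ ≤ ((1 / (a * Real.sqrt 2) + 1) * (s * Real.sqrt 2)) * ((m:ℝ) ^ m * Real.exp (-(m:ℝ))) :=
          mul_le_mul_of_nonneg_right key (by positivity)
end

section
/- Let m ≥ 1 and N ≥ 1 be integers with m ≤ N. Then ∑_{j=0}^{N} (m^j / ((m+j)!/m!)) ≤ 1 + ∑_{j=0}^{∞} exp(−j²/(2(m+j))) < ∞, and in particular ∑_{j'=0}^{⌊N^{9/10}⌋} e^{j'} (m/(m+j'))^{m+j'} ≤ C√m for an absolute constant C > 0. -/
open Real

section FRGS_aux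
open Finset

lemma log_ge_one_sub_inv {t : ℝ} (ht : 0 < t) : 1 - 1/t ≤ Real.log t := by
  have h := Real.log_le_sub_one_of_pos (show 0 < 1/t by positivity)
  rw [Real.log_div one_ne_zero (ne_of_gt ht), Real.log_one] at h
  linarith

lemma hasDerivF (a : ℝ) (ha : 0 < a) (x : ℝ) (hx : 0 ≤ x) :
    HasDerivAt (fun b : ℝ => (a+b)*(Real.log (a+b) - Real.log a) - b - b^2/(2*(a+b)))
      ((Real.log (a+x) - Real.log a) - (2*x*(a+x) - x^2)/(2*(a+x)^2)) x := by
  have h1 : (0:ℝ) < a + x := by linarith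
  have hA : HasDerivAt (fun b : ℝ => a + b) 1 x := (hasDerivAt_id x).const_add a
  have hlog : HasDerivAt (fun b : ℝ => Real.log (a+b) - Real.log a) (1/(a+x)) x := by
    have h2 : HasDerivAt (fun b : ℝ => Real.log (a+b)) (1/(a+x)) x := by
      exact ((Real.hasDerivAt_log h1.ne').comp x hA).congr_deriv (by ring)
    simpa using h2.sub_const (Real.log a)
  have hmul := hA.mul hlog
  have hsq : HasDerivAt (fun b : ℝ => b^2) (2*x) x := by
    simpa using hasDerivAt_pow 2 x
  have hden : HasDerivAt (fun b : ℝ => 2*(a+b)) (2*1) x := hA.const_mul 2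
  have hdiv := hsq.div hden (by positivity : (2*(a+x)) ≠ 0)
  have := (hmul.sub (hasDerivAt_id x)).sub hdiv
  refine this.congr_deriv ?_
  field_simp
  ring

lemma F_nonneg (a : ℝ) (ha : 0 < a) {b : ℝ} (hb : 0 ≤ b) :
    b + b^2/(2*(a+b)) ≤ (a+b)*(Real.log (a+b) - Real.log a) := by
  set F : ℝ → ℝ := fun b => (a+b)*(Real.log (a+b) - Real.log a) - b - b^2/(2*(a+b)) with hF
  have hmono : MonotoneOn F (Set.Ici 0) := by
    apply monotoneOn_of_deriv_nonneg (convex_Ici 0)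
    · intro x hx
      exact (hasDerivF a ha x hx).continuousAt.continuousWithinAt
    · intro x hx
      rw [interior_Ici] at hx
      exact (hasDerivF a ha x (le_of_lt hx)).differentiableAt.differentiableWithinAt
    · intro x hx
      rw [interior_Ici] at hx
      have hx0 : 0 < x := Set.mem_Ioi.mp hx
      rw [(hasDerivF a ha x hx0.le).deriv]
      have h1 : (0:ℝ) < a + x := by linarith
      have h3 := log_ge_one_sub_inv (show (0:ℝ) < ((a+x)/a)^2 by positivity)
      rw [Real.log_pow] at h3
      push_cast at h3
      have h4 : Real.log ((a+x)/a) = Real.log (a+x) - Real.log a :=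
        Real.log_div h1.ne' ha.ne'
      rw [h4] at h3
      have h5 : 1 - 1/(((a+x)/a)^2) = 1 - a^2/(a+x)^2 := by
        field_simp
      rw [h5] at h3
      have h6 : (2*x*(a+x) - x^2)/(2*(a+x)^2) ≤ (1 - a^2/(a+x)^2)/2 := by
        rw [div_le_div_iff₀ (by positivity) (by norm_num)]
        have : a^2/(a+x)^2 * (a+x)^2 = a^2 := by field_simp
        nlinarith [sq_nonneg x, sq_nonneg (a+x)]
      linarith
  have h0 : F 0 ≤ F b := hmono (Set.self_mem_Ici) hb hb
  have hF0 : F 0 = 0 := by simp [hF]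
  have := hF0 ▸ h0
  simp only [hF] at this
  linarith

-- part 3 pointwise bound
lemma part3_term (m j : ℕ) (hm : 1 ≤ m) :
    Real.exp j * ((m:ℝ)/((m:ℝ)+j))^(m+j) ≤ Real.exp (-(j:ℝ)^2/(2*((m:ℝ)+j))) := by
  have ha : (0:ℝ) < m := by exact_mod_cast hm
  have hb : (0:ℝ) ≤ j := Nat.cast_nonneg j
  have hab : (0:ℝ) < (m:ℝ) + j := by linarith
  have hr : (0:ℝ) < (m:ℝ)/((m:ℝ)+j) := by positivity
  have hrw : ((m:ℝ)/((m:ℝ)+j))^(m+j) = Real.exp (((m+j : ℕ):ℝ) * Real.log ((m:ℝ)/((m:ℝ)+j))) := by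
    rw [Real.exp_nat_mul, Real.exp_log hr]
  rw [hrw, ← Real.exp_add, Real.exp_le_exp]
  have hlog : Real.log ((m:ℝ)/((m:ℝ)+j)) = Real.log m - Real.log ((m:ℝ)+j) :=
    Real.log_div ha.ne' hab.ne'
  have hcast : ((m+j : ℕ):ℝ) = (m:ℝ) + j := by push_cast; ring
  rw [hlog, hcast]
  have := F_nonneg (m:ℝ) ha hb
  rw [neg_div]
  nlinarith [this]

-- factorial ratio as product
lemma ratio_eq (m : ℕ) : ∀ j : ℕ,
    (m:ℝ)^j / (((Nat.factorial (m+j) : ℕ):ℝ) / ((Nat.factorial m : ℕ):ℝ)) =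
      ∏ i ∈ range j, (m:ℝ)/((m:ℝ)+i+1)
  | 0 => by
    have h2 : ((Nat.factorial m : ℕ):ℝ) ≠ 0 := by exact_mod_cast m.factorial_pos.ne'
    simp [div_self h2]
  | (j+1) => by
    rw [prod_range_succ, ← ratio_eq m j]
    have h1 : (0:ℝ) < (Nat.factorial (m+j) : ℝ) := by exact_mod_cast (m+j).factorial_pos
    have h2 : (0:ℝ) < (Nat.factorial m : ℝ) := by exact_mod_cast m.factorial_pos
    have h3 : (0:ℝ) < (m:ℝ)+j+1 := by positivity
    have hfac : ((Nat.factorial (m+(j+1)) : ℕ):ℝ) = ((m:ℝ)+j+1) * (Nat.factorial (m+j) : ℝ) := by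
      have : m+(j+1) = (m+j)+1 := by ring
      rw [this, Nat.factorial_succ]
      push_cast; ring
    rw [hfac]
    field_simp
    ring

lemma sum_range_cast_succ (j : ℕ) : ∑ i ∈ range j, ((i:ℝ)+1) = (j:ℝ)*(j+1)/2 := by
  induction j with
  | zero => simp
  | succ j ih => rw [sum_range_succ, ih]; push_cast; ring

lemma part2_term (m j : ℕ) (hm : 1 ≤ m) :
    (m:ℝ)^j / (((Nat.factorial (m+j) : ℕ):ℝ) / ((Nat.factorial m : ℕ):ℝ)) ≤
      Real.exp (-(j:ℝ)^2/(2*((m:ℝ)+j))) := by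
  have ha : (0:ℝ) < m := by exact_mod_cast hm
  rw [ratio_eq]
  have hstep : ∀ i ∈ range j, (m:ℝ)/((m:ℝ)+i+1) ≤ Real.exp (-((i:ℝ)+1)/((m:ℝ)+j)) := by
    intro i hi
    have hij : (i:ℝ)+1 ≤ (j:ℝ) := by
      have := Finset.mem_range.mp hi
      exact_mod_cast this
    have h1 : (0:ℝ) < (m:ℝ)+i+1 := by positivity
    have h2 : (0:ℝ) < (m:ℝ)+j := by positivity
    calc (m:ℝ)/((m:ℝ)+i+1) ≤ Real.exp (-((i:ℝ)+1)/((m:ℝ)+i+1)) := by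
          have h3 := Real.add_one_le_exp (-((i:ℝ)+1)/((m:ℝ)+i+1))
          rw [div_le_iff₀ h1]
          have : (-((i:ℝ)+1)/((m:ℝ)+i+1) + 1) * ((m:ℝ)+i+1) = m := by field_simp; ring
          nlinarith [Real.exp_pos (-((i:ℝ)+1)/((m:ℝ)+i+1))]
      _ ≤ Real.exp (-((i:ℝ)+1)/((m:ℝ)+j)) := by
          rw [Real.exp_le_exp, neg_div, neg_div, neg_le_neg_iff]
          exact div_le_div_of_nonneg_left (by positivity) h1 (by linarith)
  calc ∏ i ∈ range j, (m:ℝ)/((m:ℝ)+i+1)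
      ≤ ∏ i ∈ range j, Real.exp (-((i:ℝ)+1)/((m:ℝ)+j)) := by
        apply Finset.prod_le_prod (fun i _ => by positivity) hstep
    _ = Real.exp (∑ i ∈ range j, -((i:ℝ)+1)/((m:ℝ)+j)) := by
        rw [Real.exp_sum]
    _ ≤ Real.exp (-(j:ℝ)^2/(2*((m:ℝ)+j))) := by
        rw [Real.exp_le_exp]
        have h2 : (0:ℝ) < (m:ℝ)+j := by positivity
        have hs : ∑ i ∈ range j, -((i:ℝ)+1)/((m:ℝ)+j) = -((j:ℝ)*(j+1)/2)/((m:ℝ)+j) := by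
          rw [← sum_range_cast_succ j, ← Finset.sum_div, ← Finset.sum_neg_distrib]
        rw [hs, neg_div, neg_div, neg_le_neg_iff, div_le_div_iff₀ (by positivity) h2]
        nlinarith [Nat.cast_nonneg (α := ℝ) j]

-- summability of the gaussian-type sequence
lemma gauss_summable (m : ℕ) (hm : 1 ≤ m) :
    Summable (fun j : ℕ => Real.exp (-(j : ℝ) ^ 2 / (2 * ((m : ℝ) + j)))) := by
  have ha : (0:ℝ) < m := by exact_mod_cast hm
  have hsum : Summable (fun j : ℕ => Real.exp ((m:ℝ)/4) * Real.exp (-(1:ℝ)/4) ^ j) :=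
    (summable_geometric_of_lt_one (Real.exp_nonneg _)
      (by rw [Real.exp_lt_one_iff]; norm_num)).mul_left _
  refine Summable.of_nonneg_of_le (fun j => (Real.exp_pos _).le) (fun j => ?_) hsum
  rw [← Real.exp_nat_mul, ← Real.exp_add, Real.exp_le_exp]
  have h2 : (0:ℝ) < 2*((m:ℝ)+j) := by positivity
  rw [div_le_iff₀ h2]
  nlinarith [Nat.cast_nonneg (α := ℝ) j]

lemma geom_sum_bound (r : ℝ) (h0 : 0 ≤ r) (h1 : r < 1) (K : ℕ) :
    ∑ q ∈ range K, r^q ≤ (1-r)⁻¹ := by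
  have h := Summable.sum_le_tsum (range K) (fun i _ => pow_nonneg h0 i)
    (summable_geometric_of_lt_one h0 h1)
  rwa [tsum_geometric_of_lt_one h0 h1] at h

lemma regroup (f : ℕ → ℝ) (a : ℕ) : ∀ K : ℕ,
    ∑ j ∈ range (K*a), f j = ∑ q ∈ range K, ∑ r ∈ range a, f (q*a+r)
  | 0 => by simp
  | (K+1) => by
    rw [Nat.succ_mul, Finset.sum_range_add, regroup f a K, sum_range_succ]

lemma gauss_finite_sum (m K : ℕ) (hm : 1 ≤ m) :
    ∑ j ∈ range K, Real.exp (-(j:ℝ)^2/(4*m)) ≤ 6 * Real.sqrt m := by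
  have hmr : (1:ℝ) ≤ m := by exact_mod_cast hm
  have hsm : 1 ≤ Real.sqrt m := by
    rw [show (1:ℝ) = Real.sqrt 1 by simp]
    exact Real.sqrt_le_sqrt hmr
  set a : ℕ := Nat.sqrt (4*m) + 1 with ha
  have ha1 : 1 ≤ a := Nat.le_add_left 1 _
  have ha2 : (4:ℝ)*m ≤ (a:ℝ)^2 := by
    have := Nat.lt_succ_sqrt (4*m)
    have h : 4*m ≤ a*a := le_of_lt this
    calc (4:ℝ)*m = ((4*m : ℕ):ℝ) := by push_cast; ring
      _ ≤ ((a*a : ℕ):ℝ) := by exact_mod_cast h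
      _ = (a:ℝ)^2 := by push_cast; ring
  have haux : (a:ℝ) ≤ 3 * Real.sqrt m := by
    have h1 : ((Nat.sqrt (4*m) : ℕ):ℝ) ≤ Real.sqrt ((4:ℝ)*m) := by
      apply Real.le_sqrt_of_sq_le
      have := Nat.sqrt_le' (4*m)
      calc ((Nat.sqrt (4*m) : ℕ):ℝ)^2 = ((Nat.sqrt (4*m) ^ 2 : ℕ):ℝ) := by
            push_cast; ring
        _ ≤ ((4*m : ℕ):ℝ) := Nat.cast_le.mpr this
        _ = (4:ℝ)*m := by push_cast; ring
    have h2 : Real.sqrt ((4:ℝ)*m) = 2 * Real.sqrt m := by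
      rw [show (4:ℝ)*m = 2^2 * m by ring, Real.sqrt_mul (by positivity), Real.sqrt_sq (by norm_num)]
    have : (a:ℝ) = ((Nat.sqrt (4*m) : ℕ):ℝ) + 1 := by push_cast [ha]; ring
    rw [this]
    push_cast at h1
    nlinarith
  have hnonneg : ∀ j : ℕ, 0 ≤ Real.exp (-(j:ℝ)^2/(4*m)) := fun j => (Real.exp_pos _).le
  have hsub : ∑ j ∈ range K, Real.exp (-(j:ℝ)^2/(4*m)) ≤
      ∑ j ∈ range (K*a), Real.exp (-(j:ℝ)^2/(4*m)) := by
    apply Finset.sum_le_sum_of_subset_of_nonneg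
    · exact Finset.range_subset_range.mpr (Nat.le_mul_of_pos_right K ha1)
    · intro i _ _; exact hnonneg i
  rw [regroup] at hsub
  have hinner : ∀ q ∈ range K, ∑ r ∈ range a, Real.exp (-((q*a+r:ℕ):ℝ)^2/(4*m)) ≤
      (a:ℝ) * Real.exp (-(1:ℝ))^q := by
    intro q _
    have hterm : ∀ r ∈ range a, Real.exp (-((q*a+r:ℕ):ℝ)^2/(4*m)) ≤ Real.exp (-(1:ℝ))^q := by
      intro r _
      rw [← Real.exp_nat_mul, Real.exp_le_exp, div_le_iff₀ (by positivity : (0:ℝ) < 4*m)]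
      have hcast : ((q*a+r:ℕ):ℝ) = (q:ℝ)*(a:ℝ)+(r:ℝ) := by push_cast; ring
      rw [hcast]
      have hr0 : (0:ℝ) ≤ r := Nat.cast_nonneg r
      have hq0 : (0:ℝ) ≤ q := Nat.cast_nonneg q
      have ha0 : (0:ℝ) ≤ a := Nat.cast_nonneg a
      have hqq : (q:ℝ) ≤ (q:ℝ)^2 := by
        rcases Nat.eq_zero_or_pos q with h|h
        · simp [h]
        · have h1 : (1:ℝ) ≤ q := by exact_mod_cast h
          nlinarith
      have k1 : (q:ℝ)^2*(4*(m:ℝ)) ≤ (q:ℝ)^2*(a:ℝ)^2 := by nlinarith [sq_nonneg (q:ℝ)]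
      have k2 : (q:ℝ)*(4*(m:ℝ)) ≤ (q:ℝ)^2*(4*(m:ℝ)) := by nlinarith
      nlinarith [mul_nonneg (mul_nonneg hq0 ha0) hr0, sq_nonneg (r:ℝ)]
    calc ∑ r ∈ range a, Real.exp (-((q*a+r:ℕ):ℝ)^2/(4*m))
        ≤ ∑ _r ∈ range a, Real.exp (-(1:ℝ))^q := Finset.sum_le_sum hterm
      _ = (a:ℝ) * Real.exp (-(1:ℝ))^q := by
          rw [Finset.sum_const, Finset.card_range, nsmul_eq_mul]
  have hgeom : ∑ q ∈ range K, (a:ℝ) * Real.exp (-(1:ℝ))^q ≤ (a:ℝ) * 2 := by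
    rw [← Finset.mul_sum]
    have h1 := geom_sum_bound (Real.exp (-1)) (Real.exp_nonneg _)
      (by rw [Real.exp_lt_one_iff]; norm_num) K
    have h2 : (1 - Real.exp (-1))⁻¹ ≤ 2 := by
      have he : (2:ℝ) ≤ Real.exp 1 := by
        have := Real.add_one_le_exp (1:ℝ); linarith
      have hinv : Real.exp (-1) ≤ 1/2 := by
        rw [Real.exp_neg]
        rw [inv_le_comm₀ (Real.exp_pos 1) (by norm_num)]
        linarith
      rw [inv_le_comm₀ (by linarith) (by norm_num)]
      linarith
    have ha0 : (0:ℝ) ≤ a := Nat.cast_nonneg a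
    calc (a:ℝ) * ∑ q ∈ range K, Real.exp (-(1:ℝ))^q ≤ (a:ℝ) * (1 - Real.exp (-1))⁻¹ :=
          mul_le_mul_of_nonneg_left h1 ha0
      _ ≤ (a:ℝ) * 2 := mul_le_mul_of_nonneg_left h2 ha0
  calc ∑ j ∈ range K, Real.exp (-(j:ℝ)^2/(4*m))
      ≤ ∑ q ∈ range K, ∑ r ∈ range a, Real.exp (-((q*a+r:ℕ):ℝ)^2/(4*m)) := hsub
    _ ≤ ∑ q ∈ range K, (a:ℝ) * Real.exp (-(1:ℝ))^q := Finset.sum_le_sum hinner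
    _ ≤ (a:ℝ) * 2 := hgeom
    _ ≤ 6 * Real.sqrt m := by nlinarith

lemma split_bound (m j : ℕ) (hm : 1 ≤ m) :
    Real.exp (-(j:ℝ)^2/(2*((m:ℝ)+j))) ≤
      Real.exp (-(j:ℝ)^2/(4*(m:ℝ))) + Real.exp (-(1:ℝ)/4)^j := by
  have hmr : (1:ℝ) ≤ m := by exact_mod_cast hm
  have hj0 : (0:ℝ) ≤ j := Nat.cast_nonneg j
  rcases le_or_gt j m with h | h
  · have hjm : (j:ℝ) ≤ m := by exact_mod_cast h
    have h1 : Real.exp (-(j:ℝ)^2/(2*((m:ℝ)+j))) ≤ Real.exp (-(j:ℝ)^2/(4*(m:ℝ))) := by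
      rw [Real.exp_le_exp, neg_div, neg_div, neg_le_neg_iff]
      exact div_le_div_of_nonneg_left (by positivity) (by linarith) (by linarith)
    have h2 : (0:ℝ) ≤ Real.exp (-(1:ℝ)/4)^j := by positivity
    linarith
  · have hjm : (m:ℝ) < j := by exact_mod_cast h
    have h1 : Real.exp (-(j:ℝ)^2/(2*((m:ℝ)+j))) ≤ Real.exp (-(1:ℝ)/4)^j := by
      rw [← Real.exp_nat_mul, Real.exp_le_exp, div_le_iff₀ (by positivity : (0:ℝ) < 2*((m:ℝ)+j))]
      nlinarith
    have h2 : (0:ℝ) ≤ Real.exp (-(j:ℝ)^2/(4*(m:ℝ))) := (Real.exp_pos _).le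
    linarith

end FRGS_aux

theorem factorial_ratio_gaussian_sum :
    ∃ C : ℝ, 0 < C ∧ ∀ m N : ℕ, 1 ≤ m → m ≤ N →
      Summable (fun j : ℕ => Real.exp (-(j : ℝ) ^ 2 / (2 * ((m : ℝ) + j)))) ∧
      (∑ j ∈ Finset.range (N + 1), (m : ℝ) ^ j / (((Nat.factorial (m + j) : ℕ) : ℝ) / ((Nat.factorial m : ℕ) : ℝ)))
        ≤ 1 + ∑' j : ℕ, Real.exp (-(j : ℝ) ^ 2 / (2 * ((m : ℝ) + j))) ∧
      (∑ j ∈ Finset.range (⌊(N : ℝ) ^ ((9 : ℝ) / 10)⌋₊ + 1),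
          Real.exp j * ((m : ℝ) / ((m : ℝ) + j)) ^ (m + j))
        ≤ C * Real.sqrt m := by
  refine ⟨11, by norm_num, fun m N hm hmN => ?_⟩
  have hsumm := gauss_summable m hm
  have hmr : (1:ℝ) ≤ m := by exact_mod_cast hm
  have hsm : 1 ≤ Real.sqrt m := by
    rw [show (1:ℝ) = Real.sqrt 1 by simp]
    exact Real.sqrt_le_sqrt hmr
  refine ⟨hsumm, ?_, ?_⟩
  · calc ∑ j ∈ Finset.range (N + 1), (m : ℝ) ^ j / (((Nat.factorial (m + j) : ℕ) : ℝ) / ((Nat.factorial m : ℕ) : ℝ))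
        ≤ ∑ j ∈ Finset.range (N + 1), Real.exp (-(j : ℝ) ^ 2 / (2 * ((m : ℝ) + j))) :=
          Finset.sum_le_sum (fun j _ => part2_term m j hm)
      _ ≤ ∑' j : ℕ, Real.exp (-(j : ℝ) ^ 2 / (2 * ((m : ℝ) + j))) :=
          Summable.sum_le_tsum _ (fun j _ => (Real.exp_pos _).le) hsumm
      _ ≤ 1 + ∑' j : ℕ, Real.exp (-(j : ℝ) ^ 2 / (2 * ((m : ℝ) + j))) := by linarith
  · set K := ⌊(N : ℝ) ^ ((9 : ℝ) / 10)⌋₊ + 1 with hK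
    have hfive : (1 - Real.exp (-(1:ℝ)/4))⁻¹ ≤ 5 := by
      have he : (5:ℝ)/4 ≤ Real.exp (1/4) := by
        have := Real.add_one_le_exp ((1:ℝ)/4); linarith
      have hinv : Real.exp (-(1:ℝ)/4) ≤ 4/5 := by
        rw [show -(1:ℝ)/4 = -(1/4) by norm_num, Real.exp_neg]
        rw [inv_le_comm₀ (Real.exp_pos _) (by norm_num)]
        linarith
      rw [inv_le_comm₀ (by linarith) (by norm_num)]
      linarith
    calc ∑ j ∈ Finset.range K, Real.exp j * ((m : ℝ) / ((m : ℝ) + j)) ^ (m + j)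
        ≤ ∑ j ∈ Finset.range K, Real.exp (-(j:ℝ)^2/(2*((m:ℝ)+j))) :=
          Finset.sum_le_sum (fun j _ => part3_term m j hm)
      _ ≤ ∑ j ∈ Finset.range K, (Real.exp (-(j:ℝ)^2/(4*(m:ℝ))) + Real.exp (-(1:ℝ)/4)^j) :=
          Finset.sum_le_sum (fun j _ => split_bound m j hm)
      _ = (∑ j ∈ Finset.range K, Real.exp (-(j:ℝ)^2/(4*(m:ℝ)))) +
            ∑ j ∈ Finset.range K, Real.exp (-(1:ℝ)/4)^j := Finset.sum_add_distrib
      _ ≤ 6 * Real.sqrt m + (1 - Real.exp (-(1:ℝ)/4))⁻¹ := by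
          apply add_le_add (gauss_finite_sum m K hm)
          exact geom_sum_bound _ (Real.exp_nonneg _)
            (by rw [Real.exp_lt_one_iff]; norm_num) K
      _ ≤ 6 * Real.sqrt m + 5 := by linarith
      _ ≤ 11 * Real.sqrt m := by nlinarith
end
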